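/- Consider the error dynamics x̃'(t) = A(t) x̃(t), where A(t) = ∑_{i=1}^N hᵢ(t) Aᵢ with measurable weights hᵢ(t) ≥ 0 summing to 1 for each t. Suppose there exist a symmetric positive definite P and λ > 0 such that Aᵢᵀ P + P Aᵢ + 2λP is negative semidefinite for all i. Then every solution satisfies ‖x̃(t)‖ ≤ √(λ_max(P)/λ_min(P)) · e^{-λt} · ‖x̃(0)‖ for all t ≥ 0. -/

import Mathlib

open scoped Matrix

section AuxPoly
open scoped RealInnerProductSpace

private lemma polyAux_quad_repr {n : ℕ} (P : Matrix (Fin n) (Fin n) ℝ) (hH : P.IsHermitian)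
    (x : EuclideanSpace ℝ (Fin n)) :
    (x : Fin n → ℝ) ⬝ᵥ (P *ᵥ (x : Fin n → ℝ))
      = ∑ i, hH.eigenvalues i * ⟪hH.eigenvectorBasis i, x⟫ ^ 2 := by
  classical
  set b := hH.eigenvectorBasis with hb
  have hPT : Pᵀ = P := by
    have := hH.eq
    rwa [Matrix.conjTranspose_eq_transpose_of_trivial] at this
  have key : ∀ i, ⟪b i, (Matrix.toEuclideanLin P) x⟫ = hH.eigenvalues i * ⟪b i, x⟫ := by
    intro i
    have h1 : ⟪b i, (Matrix.toEuclideanLin P) x⟫ = (b i : Fin n → ℝ) ⬝ᵥ (P *ᵥ (x : Fin n → ℝ)) := by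
      simp only [Matrix.toEuclideanLin_apply, PiLp.inner_apply, dotProduct,
        RCLike.inner_apply, conj_trivial]
      exact Finset.sum_congr rfl fun _ _ => mul_comm _ _
    have h2 : (b i : Fin n → ℝ) ⬝ᵥ (P *ᵥ (x : Fin n → ℝ))
        = (P *ᵥ (b i : Fin n → ℝ)) ⬝ᵥ (x : Fin n → ℝ) := by
      rw [Matrix.dotProduct_mulVec, ← Matrix.mulVec_transpose, hPT]
    have h3 : P *ᵥ (b i : Fin n → ℝ) = hH.eigenvalues i • (b i : Fin n → ℝ) :=
      hH.mulVec_eigenvectorBasis i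
    rw [h1, h2, h3, smul_dotProduct]
    simp only [smul_eq_mul, PiLp.inner_apply, RCLike.inner_apply, conj_trivial]
    rw [dotProduct]; exact congrArg _ (Finset.sum_congr rfl fun _ _ => mul_comm _ _)
  have hmain : (x : Fin n → ℝ) ⬝ᵥ (P *ᵥ (x : Fin n → ℝ)) = ⟪x, (Matrix.toEuclideanLin P) x⟫ := by
    simp only [Matrix.toEuclideanLin_apply, PiLp.inner_apply, dotProduct,
      RCLike.inner_apply, conj_trivial]
    exact Finset.sum_congr rfl fun _ _ => mul_comm _ _
  rw [hmain, ← b.sum_inner_mul_inner x ((Matrix.toEuclideanLin P) x)]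
  refine Finset.sum_congr rfl fun i _ => ?_
  rw [key i, real_inner_comm x (b i)]
  ring

private lemma polyAux_norm_sq_repr {n : ℕ} (P : Matrix (Fin n) (Fin n) ℝ) (hH : P.IsHermitian)
    (x : EuclideanSpace ℝ (Fin n)) :
    ‖x‖ ^ 2 = ∑ i, ⟪hH.eigenvectorBasis i, x⟫ ^ 2 := by
  have := hH.eigenvectorBasis.sum_inner_mul_inner x x
  rw [real_inner_self_eq_norm_sq] at this
  rw [← this]
  refine Finset.sum_congr rfl fun i _ => ?_
  rw [real_inner_comm x]; ring

private lemma polyAux_quad_lower {n : ℕ} (P : Matrix (Fin n) (Fin n) ℝ) (hH : P.IsHermitian)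
    {lmin : ℝ} (hmin : ∀ i, lmin ≤ hH.eigenvalues i) (x : EuclideanSpace ℝ (Fin n)) :
    lmin * ‖x‖ ^ 2 ≤ (x : Fin n → ℝ) ⬝ᵥ (P *ᵥ (x : Fin n → ℝ)) := by
  rw [polyAux_quad_repr P hH x, polyAux_norm_sq_repr P hH x, Finset.mul_sum]
  exact Finset.sum_le_sum fun i _ =>
    mul_le_mul_of_nonneg_right (hmin i) (sq_nonneg _)

private lemma polyAux_quad_upper {n : ℕ} (P : Matrix (Fin n) (Fin n) ℝ) (hH : P.IsHermitian)
    {lmax : ℝ} (hmax : ∀ i, hH.eigenvalues i ≤ lmax) (x : EuclideanSpace ℝ (Fin n)) :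
    (x : Fin n → ℝ) ⬝ᵥ (P *ᵥ (x : Fin n → ℝ)) ≤ lmax * ‖x‖ ^ 2 := by
  rw [polyAux_quad_repr P hH x, polyAux_norm_sq_repr P hH x, Finset.mul_sum]
  exact Finset.sum_le_sum fun i _ =>
    mul_le_mul_of_nonneg_right (hmax i) (sq_nonneg _)

private lemma polyAux_sum_mulVec {n N : ℕ} (M : Fin N → Matrix (Fin n) (Fin n) ℝ)
    (x : Fin n → ℝ) : (∑ i, M i) *ᵥ x = ∑ i, (M i *ᵥ x) := by
  funext j
  simp only [Matrix.mulVec, dotProduct, Matrix.sum_apply, Finset.sum_apply,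
    Finset.sum_mul]
  rw [Finset.sum_comm]

private lemma polyAux_dotProduct_sum {n N : ℕ} (x : Fin n → ℝ) (v : Fin N → (Fin n → ℝ)) :
    x ⬝ᵥ (∑ i, v i) = ∑ i, x ⬝ᵥ (v i) := by
  simp only [dotProduct, Finset.sum_apply, Finset.mul_sum]
  rw [Finset.sum_comm]

end AuxPoly

/-- Exponential convergence of polytopic LPV error dynamics certified by a common
Lyapunov matrix at the vertices. -/
theorem polytopic_exponential_convergence (n N : ℕ)
    (A : Fin N → Matrix (Fin n) (Fin n) ℝ)
    (h : Fin N → ℝ → ℝ) (hcont : ∀ i, Continuous (h i))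
    (hnn : ∀ i, ∀ t ≥ (0:ℝ), 0 ≤ h i t) (hsum : ∀ t ≥ (0:ℝ), ∑ i, h i t = 1)
    (P : Matrix (Fin n) (Fin n) ℝ) (hP : P.PosDef) (hH : P.IsHermitian)
    (lam : ℝ) (hlam : 0 < lam)
    (hlmi : ∀ i, ∀ x : Fin n → ℝ,
      x ⬝ᵥ (((A i)ᵀ * P + P * A i + (2 * lam) • P) *ᵥ x) ≤ 0)
    (lmin lmax : ℝ)
    (hmin : IsLeast (Set.range hH.eigenvalues) lmin)
    (hmax : IsGreatest (Set.range hH.eigenvalues) lmax)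
    (xt : ℝ → EuclideanSpace ℝ (Fin n)) (hdiff : Differentiable ℝ xt)
    (hode : ∀ t ≥ (0:ℝ),
      deriv xt t = (fun v => (∑ i, h i t • A i) *ᵥ v) (xt t)) :
    ∀ t ≥ (0:ℝ), ‖xt t‖ ≤ Real.sqrt (lmax / lmin) * Real.exp (-lam * t) * ‖xt 0‖ := by
  classical
  intro t ht
  obtain ⟨i0, hi0⟩ := hmin.1
  have hlmin_pos : 0 < lmin := hi0 ▸ hP.eigenvalues_pos i0
  have hlmax_pos : 0 < lmax := lt_of_lt_of_le hlmin_pos (hmin.2 hmax.1)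
  have hminb : ∀ i, lmin ≤ hH.eigenvalues i := fun i => hmin.2 ⟨i, rfl⟩
  have hmaxb : ∀ i, hH.eigenvalues i ≤ lmax := fun i => hmax.2 ⟨i, rfl⟩
  -- the Lyapunov function
  set L : EuclideanSpace ℝ (Fin n) →L[ℝ] EuclideanSpace ℝ (Fin n) :=
    LinearMap.toContinuousLinearMap (Matrix.toEuclideanLin P) with hLdef
  have hLapp : ∀ v u : EuclideanSpace ℝ (Fin n),
      (inner ℝ u (L v) : ℝ) = (u : Fin n → ℝ) ⬝ᵥ (P *ᵥ (v : Fin n → ℝ)) := by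
    intro v u
    simp only [hLdef, LinearMap.coe_toContinuousLinearMap', Matrix.toEuclideanLin_apply,
      PiLp.inner_apply, RCLike.inner_apply, conj_trivial, dotProduct]
    exact Finset.sum_congr rfl fun _ _ => mul_comm _ _
  set V : ℝ → ℝ := fun s => (inner ℝ (xt s) (L (xt s)) : ℝ) with hVdef
  set D : ℝ → ℝ := fun s => (inner ℝ (xt s) (L (deriv xt s)) : ℝ)
      + (inner ℝ (deriv xt s) (L (xt s)) : ℝ) with hDdef
  have hVd : ∀ s, HasDerivAt V (D s) s := by
    intro s
    have hx := (hdiff s).hasDerivAt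
    have hLx : HasDerivAt (fun u => L (xt u)) (L (deriv xt s)) s :=
      L.hasFDerivAt.comp_hasDerivAt s hx
    exact HasDerivAt.inner ℝ hx hLx
  -- the key differential inequality
  have hkey : ∀ s ≥ (0:ℝ), D s + 2 * lam * V s ≤ 0 := by
    intro s hs
    have hx' : (deriv xt s).ofLp
        = ((∑ i, h i s • A i) *ᵥ (xt s : Fin n → ℝ) : Fin n → ℝ) :=
      hode s hs
    set M : Matrix (Fin n) (Fin n) ℝ := ∑ i, h i s • A i with hMdef
    have e1 : (inner ℝ (xt s) (L (deriv xt s)) : ℝ)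
        = (xt s : Fin n → ℝ) ⬝ᵥ ((P * M) *ᵥ (xt s : Fin n → ℝ)) := by
      rw [hLapp, hx', Matrix.mulVec_mulVec]
    have e2 : (inner ℝ (deriv xt s) (L (xt s)) : ℝ)
        = (xt s : Fin n → ℝ) ⬝ᵥ ((Mᵀ * P) *ᵥ (xt s : Fin n → ℝ)) := by
      rw [hLapp, hx']
      rw [← Matrix.mulVec_mulVec, Matrix.dotProduct_mulVec (xt s : Fin n → ℝ) Mᵀ,
        Matrix.vecMul_transpose]
    have hVs : V s = (xt s : Fin n → ℝ) ⬝ᵥ (P *ᵥ (xt s : Fin n → ℝ)) := hLapp _ _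
    have hMsum : Mᵀ * P + P * M + (2 * lam) • P
        = ∑ i, h i s • ((A i)ᵀ * P + P * (A i) + (2 * lam) • P) := by
      simp only [smul_add, Finset.sum_add_distrib]
      congr 1
      · congr 1
        · rw [hMdef, Matrix.transpose_sum, Finset.sum_mul]
          refine Finset.sum_congr rfl fun i _ => ?_
          rw [Matrix.transpose_smul, Matrix.smul_mul]
        · rw [hMdef, Matrix.mul_sum]
          refine Finset.sum_congr rfl fun i _ => ?_
          rw [Matrix.mul_smul]
      · rw [← Finset.sum_smul, hsum s hs, one_smul]
    have hsum_nonpos :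
        (xt s : Fin n → ℝ) ⬝ᵥ ((∑ i, h i s • ((A i)ᵀ * P + P * (A i) + (2 * lam) • P)) *ᵥ
          (xt s : Fin n → ℝ)) ≤ 0 := by
      rw [polyAux_sum_mulVec, polyAux_dotProduct_sum]
      refine Finset.sum_nonpos fun i _ => ?_
      rw [Matrix.smul_mulVec, dotProduct_smul, smul_eq_mul]
      exact mul_nonpos_of_nonneg_of_nonpos (hnn i s hs) (hlmi i (xt s : Fin n → ℝ))
    have hD2 : D s + 2 * lam * V s
        = (xt s : Fin n → ℝ) ⬝ᵥ ((Mᵀ * P + P * M + (2 * lam) • P) *ᵥ (xt s : Fin n → ℝ)) := by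
      rw [hDdef]
      simp only
      rw [e1, e2, hVs]
      simp only [Matrix.add_mulVec, dotProduct_add, Matrix.smul_mulVec,
        dotProduct_smul, smul_eq_mul]
      ring
    rw [hD2, hMsum]
    exact hsum_nonpos
  -- Gronwall via monotonicity
  set f : ℝ → ℝ := fun s => V s * Real.exp (2 * lam * s) with hfdef
  have hfd : ∀ s, HasDerivAt f ((D s + 2 * lam * V s) * Real.exp (2 * lam * s)) s := by
    intro s
    have he : HasDerivAt (fun u => Real.exp (2 * lam * u))
        (2 * lam * Real.exp (2 * lam * s)) s := by
      have := ((hasDerivAt_id s).const_mul (2 * lam)).exp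
      simpa [mul_comm] using this
    have := (hVd s).mul he
    exact this.congr_deriv (by ring)
  have hanti : AntitoneOn f (Set.Ici (0:ℝ)) := by
    apply antitoneOn_of_deriv_nonpos (convex_Ici 0)
    · exact (continuous_iff_continuousAt.2
        fun s => (hfd s).differentiableAt.continuousAt).continuousOn
    · exact fun s _ => (hfd s).differentiableAt.differentiableWithinAt
    · intro s hs
      rw [interior_Ici] at hs
      rw [(hfd s).deriv]
      exact mul_nonpos_of_nonpos_of_nonneg (hkey s (le_of_lt hs)) (Real.exp_pos _).le
  have hft : f t ≤ f 0 := hanti Set.self_mem_Ici ht ht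
  have h1 : V t * Real.exp (2 * lam * t) ≤ V 0 := by
    simpa [hfdef] using hft
  have hee : Real.exp (2 * lam * t) * Real.exp (-(2 * lam) * t) = 1 := by
    rw [← Real.exp_add, show 2 * lam * t + -(2 * lam) * t = 0 by ring, Real.exp_zero]
  have hVt : V t ≤ V 0 * Real.exp (-(2 * lam) * t) := by
    calc V t = V t * Real.exp (2 * lam * t) * Real.exp (-(2 * lam) * t) := by
          rw [mul_assoc, hee, mul_one]
      _ ≤ V 0 * Real.exp (-(2 * lam) * t) :=
          mul_le_mul_of_nonneg_right h1 (Real.exp_pos _).le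
  -- assemble the bounds
  have hlow : lmin * ‖xt t‖ ^ 2 ≤ V t := by
    have := polyAux_quad_lower P hH hminb (xt t)
    rw [← hLapp (xt t) (xt t)] at this
    exact this
  have hup : V 0 ≤ lmax * ‖xt 0‖ ^ 2 := by
    have := polyAux_quad_upper P hH hmaxb (xt 0)
    rw [← hLapp (xt 0) (xt 0)] at this
    exact this
  have hnormsq : ‖xt t‖ ^ 2 ≤ (lmax / lmin) * Real.exp (-(2 * lam) * t) * ‖xt 0‖ ^ 2 := by
    have e1 : V t ≤ lmax * ‖xt 0‖ ^ 2 * Real.exp (-(2 * lam) * t) :=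
      hVt.trans (mul_le_mul_of_nonneg_right hup (Real.exp_pos _).le)
    have e2 := hlow.trans e1
    rw [div_mul_eq_mul_div, div_mul_eq_mul_div, le_div_iff₀ hlmin_pos]
    nlinarith
  -- take square roots
  have hfinal := Real.sqrt_le_sqrt hnormsq
  rw [Real.sqrt_sq (norm_nonneg _)] at hfinal
  refine hfinal.trans (le_of_eq ?_)
  rw [Real.sqrt_mul (by positivity), Real.sqrt_mul (by positivity),
    Real.sqrt_sq (norm_nonneg _)]
  congr 2
  rw [show -(2 * lam) * t = -lam * t + -lam * t by ring, Real.exp_add,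
    Real.sqrt_mul_self (Real.exp_pos _).le]
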